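/- Let C ⊆ [K] := {1,…,K} with |C| = ηK for some η ∈ (0,1] (so ηK is an integer), and let I := {(j,k) ∈ 𝒢 : j ∉ C or k ∉ C} be the set of pairs involving at least one client outside C, with s := |I|. Let U ∈ ℝ^{Gq×r} have orthonormal columns and satisfy the block incoherence condition max_{g∈𝒢} ‖U^{(g)}‖_F² ≤ μr/G for some μ ≥ 1, where U^{(g)} is the g-th row block of U. Let P_U be the map M ↦ U Uᵀ M on ℝ^{Gq×p} and ρ := ‖P_I ∘ P_U ∘ P_I‖_op. If η > sqrt(1 − 1/(μr) + 1/(4(K−1))), then ρ < 1. -/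

import Mathlib

open Matrix

/-- The set of client pairs `𝒢 = {(j,k) : j < k}`. -/
abbrev PairIdx (K : ℕ) := {g : Fin K × Fin K // g.1 < g.2}

/-- Frobenius norm of a real matrix. -/
noncomputable def frob {m n : Type*} [Fintype m] [Fintype n] (A : Matrix m n ℝ) : ℝ :=
  Real.sqrt (∑ i, ∑ j, (A i j) ^ 2)

/-- Operator norm (w.r.t. the Frobenius norm) of a map on matrices. -/
noncomputable def opNormF {m n : Type*} [Fintype m] [Fintype n]
    (T : Matrix m n ℝ → Matrix m n ℝ) : ℝ :=
  sInf {c | 0 ≤ c ∧ ∀ M, frob (T M) ≤ c * frob M}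

/-- The 0/1 diagonal matrix `Π_I` selecting the rows of the blocks in `I`. -/
def PiMat (K q : ℕ) (I : Finset (PairIdx K)) :
    Matrix (PairIdx K × Fin q) (PairIdx K × Fin q) ℝ :=
  Matrix.diagonal fun gi => if gi.1 ∈ I then 1 else 0

/-- The `g`-th row block of a stacked matrix. -/
def blk {K q p : ℕ} (X : Matrix (PairIdx K × Fin q) (Fin p) ℝ) (g : PairIdx K) :
    Matrix (Fin q) (Fin p) ℝ :=
  fun i j => X (g, i) j

/-! With `A := Π_I U` the map is `M ↦ A (Aᵀ M)`, and Cauchy–Schwarz applied to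
`‖Aᵀ M‖² = ⟨M, A (Aᵀ M)⟩` bounds its norm by any `c` with `‖A W‖² ≤ c ‖W‖²`. Block incoherence
gives such a `c = s · μ r / G`, and `s / G = 1 - η² + η (1 - η) / (K - 1)`; since
`η (1 - η) ≤ 1/4`, the hypothesis on `η` is exactly what makes `c < 1`. -/

section Frobenius

variable {l m n : Type*} [Fintype l] [Fintype m] [Fintype n]

lemma frob_nonneg (A : Matrix m n ℝ) : 0 ≤ frob A := Real.sqrt_nonneg _

lemma frob_sq (A : Matrix m n ℝ) : frob A ^ 2 = ∑ i, ∑ j, A i j ^ 2 :=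
  Real.sq_sqrt (by positivity)

lemma frob_sq_eq_trace (A : Matrix m n ℝ) : frob A ^ 2 = trace (Aᵀ * A) := by
  rw [frob_sq, trace, Finset.sum_comm]
  simp [mul_apply, sq]

attribute [local instance] Matrix.frobeniusSeminormedAddCommGroup in
lemma frob_eq_norm (A : Matrix m n ℝ) : frob A = ‖A‖ := by
  rw [frobenius_norm_def, frob, Real.sqrt_eq_rpow]
  simp [Real.norm_eq_abs, sq_abs]

attribute [local instance] Matrix.frobeniusSeminormedAddCommGroup in
lemma frob_mul_le (A : Matrix l m ℝ) (B : Matrix m n ℝ) : frob (A * B) ≤ frob A * frob B := by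
  simpa only [frob_eq_norm] using frobenius_norm_mul A B

lemma trace_transpose_mul_le (A B : Matrix m n ℝ) : trace (Aᵀ * B) ≤ frob A * frob B := by
  have h := Real.sum_mul_le_sqrt_mul_sqrt Finset.univ (fun x : m × n => A x.1 x.2)
    (fun x => B x.1 x.2)
  have htr : trace (Aᵀ * B) = ∑ i, ∑ j, A i j * B i j := by
    simp only [trace, diag, mul_apply, transpose_apply]
    exact Finset.sum_comm
  simpa [htr, frob, Fintype.sum_prod_type] using h

lemma frob_transpose_mul_sq_le (A : Matrix m n ℝ) (M : Matrix m l ℝ) :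
    frob (Aᵀ * M) ^ 2 ≤ frob M * frob (A * (Aᵀ * M)) := by
  have h : (Aᵀ * M)ᵀ * (Aᵀ * M) = Mᵀ * (A * (Aᵀ * M)) := by
    rw [transpose_mul, transpose_transpose, Matrix.mul_assoc]
  rw [frob_sq_eq_trace, h]
  exact trace_transpose_mul_le _ _

lemma frob_mul_transpose_mul_le {A : Matrix m n ℝ} {c : ℝ} (hc : 0 ≤ c)
    (hA : ∀ W : Matrix n l ℝ, frob (A * W) ^ 2 ≤ c * frob W ^ 2) (M : Matrix m l ℝ) :
    frob (A * (Aᵀ * M)) ≤ c * frob M := by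
  set F := frob (A * (Aᵀ * M))
  have hF : F ^ 2 ≤ c * F * frob M := by
    calc F ^ 2 ≤ c * frob (Aᵀ * M) ^ 2 := hA _
      _ ≤ c * (frob M * F) := by gcongr; exact frob_transpose_mul_sq_le A M
      _ = c * F * frob M := by ring
  nlinarith [frob_nonneg (A * (Aᵀ * M)), mul_nonneg hc (frob_nonneg M)]

lemma opNormF_le {T : Matrix m n ℝ → Matrix m n ℝ} {c : ℝ} (hc : 0 ≤ c)
    (hT : ∀ M, frob (T M) ≤ c * frob M) : opNormF T ≤ c :=
  csInf_le ⟨0, fun _ h => h.1⟩ ⟨hc, hT⟩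

end Frobenius

section Blocks

variable {K q p r : ℕ}

lemma blk_mul (X : Matrix (PairIdx K × Fin q) (Fin r) ℝ) (W : Matrix (Fin r) (Fin p) ℝ)
    (g : PairIdx K) : blk (X * W) g = blk X g * W :=
  rfl

lemma frob_sq_eq_sum_blk (X : Matrix (PairIdx K × Fin q) (Fin p) ℝ) :
    frob X ^ 2 = ∑ g, frob (blk X g) ^ 2 := by
  simp only [frob_sq, blk, Fintype.sum_prod_type]

lemma PiMat_transpose (I : Finset (PairIdx K)) : (PiMat K q I)ᵀ = PiMat K q I :=
  diagonal_transpose _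

lemma blk_PiMat_mul (I : Finset (PairIdx K)) (X : Matrix (PairIdx K × Fin q) (Fin p) ℝ)
    (g : PairIdx K) : blk (PiMat K q I * X) g = if g ∈ I then blk X g else 0 := by
  ext i j
  split_ifs with hg <;> simp [blk, PiMat, hg]

lemma frob_PiMat_mul_sq (I : Finset (PairIdx K)) (X : Matrix (PairIdx K × Fin q) (Fin p) ℝ) :
    frob (PiMat K q I * X) ^ 2 = ∑ g ∈ I, frob (blk X g) ^ 2 := by
  have hblk : ∀ g, frob (blk (PiMat K q I * X) g) ^ 2 = if g ∈ I then frob (blk X g) ^ 2 else 0 := by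
    intro g
    rw [blk_PiMat_mul]
    split_ifs <;> simp [frob]
  rw [frob_sq_eq_sum_blk, Fintype.sum_congr _ _ hblk, Finset.sum_ite_mem, Finset.univ_inter]

lemma frob_PiMat_mul_mul_sq_le (I : Finset (PairIdx K)) {U : Matrix (PairIdx K × Fin q) (Fin r) ℝ}
    {β : ℝ} (hU : ∀ g, frob (blk U g) ^ 2 ≤ β) (W : Matrix (Fin r) (Fin p) ℝ) :
    frob (PiMat K q I * (U * W)) ^ 2 ≤ I.card * β * frob W ^ 2 := by
  rw [frob_PiMat_mul_sq]
  calc ∑ g ∈ I, frob (blk (U * W) g) ^ 2 ≤ ∑ _g ∈ I, β * frob W ^ 2 := by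
        gcongr with g
        calc frob (blk (U * W) g) ^ 2 ≤ (frob (blk U g) * frob W) ^ 2 :=
              pow_le_pow_left₀ (frob_nonneg _) (frob_mul_le _ _) 2
          _ = frob (blk U g) ^ 2 * frob W ^ 2 := mul_pow _ _ _
          _ ≤ β * frob W ^ 2 := by gcongr; exact hU g
    _ = I.card * β * frob W ^ 2 := by rw [Finset.sum_const, nsmul_eq_mul, mul_assoc]

end Blocks

section Counting

open Finset

lemma card_filter_pairIdx_mem {K : ℕ} (S : Finset (Fin K)) :
    #{g : PairIdx K | g.1.1 ∈ S ∧ g.1.2 ∈ S} = S.card.choose 2 := by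
  rw [← Finset.card_product_filter_lt, ← Finset.card_map (Function.Embedding.subtype _)]
  congr 1
  ext ⟨a, b⟩
  simp [and_comm]

lemma card_pairIdx (K : ℕ) : Fintype.card (PairIdx K) = K.choose 2 := by
  simpa using card_filter_pairIdx_mem (Finset.univ : Finset (Fin K))

lemma card_filter_pairIdx_notMem {K : ℕ} (C : Finset (Fin K)) :
    (#{g : PairIdx K | g.1.1 ∉ C ∨ g.1.2 ∉ C} : ℝ) = K.choose 2 - C.card.choose 2 := by
  have h := card_filter_add_card_filter_not (s := univ)
    (p := fun g : PairIdx K => g.1.1 ∈ C ∧ g.1.2 ∈ C)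
  rw [card_filter_pairIdx_mem, card_univ, card_pairIdx] at h
  simp only [not_and_or] at h
  rw [← h]
  push_cast
  ring

end Counting

lemma one_sub_choose_two_div_choose_two {K a : ℕ} {η : ℝ} (hK : 2 ≤ K) (ha : (a : ℝ) = η * K) :
    1 - (a.choose 2 : ℝ) / K.choose 2 = 1 - η ^ 2 + η * (1 - η) / (K - 1) := by
  have hK' : (2 : ℝ) ≤ K := by exact_mod_cast hK
  have hK0 : (K : ℝ) ≠ 0 := by positivity
  have hK1 : (K : ℝ) - 1 ≠ 0 := by linarith
  rw [Nat.cast_choose_two, Nat.cast_choose_two, ha]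
  field_simp
  ring

lemma mul_lt_one_of_one_sub_inv_add_lt_sq {x e η : ℝ} (hx : 0 < x) (he : 0 < e)
    (h : 1 - 1 / x + 1 / (4 * e) < η ^ 2) : (1 - η ^ 2 + η * (1 - η) / e) * x < 1 := by
  have hη : η * (1 - η) / e ≤ 1 / (4 * e) := by
    rw [div_le_div_iff₀ he (by positivity)]
    nlinarith [sq_nonneg (2 * η - 1)]
  have hlt : 1 - η ^ 2 + η * (1 - η) / e < 1 / x := by linarith
  calc (1 - η ^ 2 + η * (1 - η) / e) * x < 1 / x * x := by gcongr
    _ = 1 := one_div_mul_cancel hx.ne'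

theorem stmt2_general {K q p r : ℕ} (hK : 2 ≤ K) (hr : 1 ≤ r)
    (C : Finset (Fin K)) (η : ℝ)
    (hCcard : (C.card : ℝ) = η * K)
    (U : Matrix (PairIdx K × Fin q) (Fin r) ℝ)
    (μ : ℝ) (hμ : 1 ≤ μ)
    (hinc : ∀ g : PairIdx K, frob (blk U g) ^ 2 ≤ μ * r / (Fintype.card (PairIdx K)))
    (hη : η > Real.sqrt (1 - 1 / (μ * r) + 1 / (4 * ((K : ℝ) - 1)))) :
    opNormF (fun M : Matrix (PairIdx K × Fin q) (Fin p) ℝ =>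
        PiMat K q {g : PairIdx K | g.1.1 ∉ C ∨ g.1.2 ∉ C} *
          (U * (Uᵀ * (PiMat K q {g : PairIdx K | g.1.1 ∉ C ∨ g.1.2 ∉ C} * M)))) < 1 := by
  set I : Finset (PairIdx K) := {g : PairIdx K | g.1.1 ∉ C ∨ g.1.2 ∉ C}
  set P := PiMat K q I
  have hK1 : (0 : ℝ) < K - 1 := by
    have : (2 : ℝ) ≤ K := by exact_mod_cast hK
    linarith
  have hμr : 0 < μ * r := mul_pos (by linarith) (by exact_mod_cast hr)
  have hG : (0 : ℝ) < K.choose 2 := by exact_mod_cast Nat.choose_pos hK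
  set c : ℝ := I.card * (μ * r / Fintype.card (PairIdx K))
  have hc1 : c < 1 :=
    calc c = (1 - (C.card.choose 2 : ℝ) / K.choose 2) * (μ * r) := by
          simp only [c, I, card_filter_pairIdx_notMem, card_pairIdx]
          field_simp
      _ = (1 - η ^ 2 + η * (1 - η) / (K - 1)) * (μ * r) := by
          rw [one_sub_choose_two_div_choose_two hK hCcard]
      _ < 1 := mul_lt_one_of_one_sub_inv_add_lt_sq hμr hK1 (Real.lt_sq_of_sqrt_lt hη)
  have hc0 : 0 ≤ c := by positivity
  refine (opNormF_le hc0 fun M => ?_).trans_lt hc1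
  have hfactor : P * (U * (Uᵀ * (P * M))) = (P * U) * ((P * U)ᵀ * M) := by
    simp only [transpose_mul, P, PiMat_transpose, Matrix.mul_assoc]
  rw [hfactor]
  exact frob_mul_transpose_mul_le hc0
    (fun W => by simpa only [Matrix.mul_assoc] using frob_PiMat_mul_mul_sq_le I hinc W) M

/-- if `η > sqrt(1 − 1/(μr) + 1/(4(K−1)))` then `ρ < 1`. -/
theorem stmt2 {K q p r : ℕ} (hK : 2 ≤ K) (hq : 1 ≤ q) (hp : 1 ≤ p) (hr : 1 ≤ r)
    (C : Finset (Fin K)) (η : ℝ) (hη0 : 0 < η) (hη1 : η ≤ 1)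
    (hCcard : (C.card : ℝ) = η * K)
    (U : Matrix (PairIdx K × Fin q) (Fin r) ℝ) (hU : Uᵀ * U = 1)
    (μ : ℝ) (hμ : 1 ≤ μ)
    (hinc : ∀ g : PairIdx K, frob (blk U g) ^ 2 ≤ μ * r / (Fintype.card (PairIdx K)))
    (hη : η > Real.sqrt (1 - 1 / (μ * r) + 1 / (4 * ((K : ℝ) - 1)))) :
    opNormF (fun M : Matrix (PairIdx K × Fin q) (Fin p) ℝ =>
        PiMat K q {g : PairIdx K | g.1.1 ∉ C ∨ g.1.2 ∉ C} *
          (U * (Uᵀ * (PiMat K q {g : PairIdx K | g.1.1 ∉ C ∨ g.1.2 ∉ C} * M)))) < 1 :=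
  stmt2_general hK hr C η hCcard U μ hμ hinc hη
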